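/- arXiv:0912.0620 — 2 statements merged into one kernel-verified Lean document; each statement's English description precedes it below -/
import Mathlib

section
/- For a prime p ≡ 1 (mod 4) and every nonnegative integer n, 4^p · ∏_{i=0}^{p−1} ((1+4(i+np))/(1+i+np))^2 ≡ 4·((1+4n)/(1+n))^2 (mod p^2), as an equality of p-adic units modulo p^2 (assuming 1+n is coprime to p). -/
/-!
Each of `∏_{i<p} (1 + 4(i + np))` and `∏_{i<p} (1 + i + np)` has exactly one factor divisible by
`p`, namely `p(1 + 4n)` and `p(1 + n)`; with `A`, `B` the products of the other factors, the claim
becomes `4^p A² ≡ 4 B² (mod p²)`. The factors of `A` (and of `B`) run over the nonzero residues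
mod `p`, and such a product does not change mod `p²` when every factor is shifted by the same
multiple `pm` of `p`: the first-order term is `pm · ∏ aⱼ · ∑ 1/aᵢ`, and the inverses of the nonzero
residues sum to `0`. So we may take `n = 0`, where `B = (p-1)!`. Then the congruence comes from
`(4p)! = 2^{2p} (2p)! ∏_{i<p} (4i+1)(4i+3)`: removing the multiples of `p` from `(kp)!` leaves `k`
blocks, each `≡ (p-1)!`, and reversing `i ↦ p - 1 - i` turns the factors `4i + 3` into
`4p - (4i + 1)`, whose reduced product is again `≡ A`.
-/

open Finset Nat

variable {ι : Type*} [DecidableEq ι]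

theorem Finset.sq_dvd_prod_add_mul_sub {R : Type*} [CommRing R] (s : Finset ι) (c d : ι → R)
    (e : R) :
    e ^ 2 ∣ ∏ i ∈ s, (c i + e * d i)
      - (∏ i ∈ s, c i + e * ∑ i ∈ s, d i * ∏ j ∈ s.erase i, c j) := by
  induction s using Finset.induction_on with
  | empty => simp
  | insert a s ha ih =>
    obtain ⟨r, hr⟩ := ih
    have herase : ∀ i ∈ s, ∏ j ∈ (insert a s).erase i, c j = c a * ∏ j ∈ s.erase i, c j :=
      fun i hi => by
        rw [erase_insert_of_ne (ne_of_mem_of_not_mem hi ha).symm, prod_insert (by simp [ha])]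
    rw [prod_insert ha, prod_insert ha, sum_insert ha, erase_insert ha, sum_congr rfl fun i hi => by
      rw [herase i hi, mul_left_comm], ← mul_sum]
    exact ⟨(c a + e * d a) * r + d a * ∑ i ∈ s, d i * ∏ j ∈ s.erase i, c j, by
      linear_combination (c a + e * d a) * hr⟩

theorem Finset.sum_prod_erase_eq_prod_mul_sum_inv {K : Type*} [Field K] (s : Finset ι)
    (a : ι → K) (ha : ∀ i ∈ s, a i ≠ 0) :
    ∑ i ∈ s, ∏ j ∈ s.erase i, a j = (∏ i ∈ s, a i) * ∑ i ∈ s, (a i)⁻¹ := by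
  rw [mul_sum]
  refine sum_congr rfl fun i hi => ?_
  rw [eq_mul_inv_iff_mul_eq₀ (ha i hi), prod_erase_mul _ _ hi]

theorem ZMod.sum_range_eq_sum_univ {M : Type*} [AddCommMonoid M] (n : ℕ) [NeZero n]
    (f : ZMod n → M) : ∑ i ∈ range n, f i = ∑ x, f x :=
  sum_nbij' (fun i => (i : ZMod n)) ZMod.val (by simp) (fun x _ => mem_range.2 x.val_lt)
    (fun i hi => ZMod.val_cast_of_lt (mem_range.1 hi)) (fun x _ => ZMod.natCast_zmod_val x)
    (fun _ _ => rfl)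

theorem ZMod.sum_inv_eq_zero {p : ℕ} [Fact p.Prime] (hp2 : p ≠ 2) : ∑ x : ZMod p, x⁻¹ = 0 := by
  rw [show ∑ x : ZMod p, x⁻¹ = ∑ x : ZMod p, x from Equiv.sum_comp (Equiv.inv (ZMod p)) id]
  simpa using FiniteField.sum_pow_lt_card_sub_one (K := ZMod p) 1
    (by have := (Fact.out : p.Prime).two_le; rw [ZMod.card]; omega)

theorem ZMod.sum_range_inv_mul_add_eq_zero {p : ℕ} [Fact p.Prime] (hp2 : p ≠ 2) {u : ZMod p}
    (hu : u ≠ 0) (b : ZMod p) : ∑ i ∈ range p, (u * i + b)⁻¹ = 0 := by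
  rw [ZMod.sum_range_eq_sum_univ p (fun x => (u * x + b)⁻¹), ← ZMod.sum_inv_eq_zero hp2]
  exact ((Equiv.mulLeft₀ u hu).trans (Equiv.addRight b)).sum_comp (fun x => x⁻¹)

theorem Nat.Prime.not_intCast_dvd_four {p : ℕ} (hp : p.Prime) (hp2 : p ≠ 2) : ¬ (p : ℤ) ∣ 4 := by
  rw [show (4 : ℤ) = ((2 ^ 2 : ℕ) : ℤ) by norm_num, Int.natCast_dvd_natCast]
  exact fun h => hp2 ((Nat.prime_dvd_prime_iff_eq hp Nat.prime_two).1 (hp.dvd_of_dvd_pow h))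

theorem factorial_four_mul (m : ℕ) :
    (4 * m)! = 2 ^ (2 * m) * (2 * m)! * ∏ i ∈ range m, ((4 * i + 1) * (4 * i + 3)) := by
  induction m with
  | zero => simp
  | succ m ih =>
    rw [show 4 * (m + 1) = 4 * m + 3 + 1 by ring, show 2 * (m + 1) = 2 * m + 1 + 1 by ring]
    simp only [factorial_succ, prod_range_succ]
    rw [show 4 * m + 1 + 1 = 2 * (2 * m + 1) by ring,
      show 4 * m + 3 + 1 = 2 * (2 * m + 1 + 1) by ring, ih]
    ring

section Prime

variable {p : ℕ} [Fact p.Prime]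

theorem prod_erase_add_prime_mul_modEq (hp2 : p ≠ 2) {u b : ℤ} (hu : ¬ (p : ℤ) ∣ u) {k : ℕ}
    (hk : k < p) (hkb : (p : ℤ) ∣ u * k + b) (m : ℤ) :
    ∏ i ∈ (range p).erase k, (u * i + b + p * m) ≡ ∏ i ∈ (range p).erase k, (u * i + b)
      [ZMOD p ^ 2] := by
  set s := (range p).erase k
  rw [← ZMod.intCast_zmod_eq_zero_iff_dvd] at hu hkb
  push_cast at hkb
  have hne : ∀ i ∈ s, ((u * i + b : ℤ) : ZMod p) ≠ 0 := by
    intro i hi h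
    push_cast at h
    have hik : (i : ZMod p) = k := mul_left_cancel₀ hu (by linear_combination h - hkb)
    rw [ZMod.natCast_eq_natCast_iff', Nat.mod_eq_of_lt (mem_range.1 (mem_of_mem_erase hi)),
      Nat.mod_eq_of_lt hk] at hik
    exact ne_of_mem_erase hi hik
  have hsum : (p : ℤ) ∣ ∑ i ∈ s, ∏ j ∈ s.erase i, (u * j + b) := by
    rw [← ZMod.intCast_zmod_eq_zero_iff_dvd, Int.cast_sum]
    simp_rw [Int.cast_prod]
    rw [sum_prod_erase_eq_prod_mul_sum_inv _ _ hne]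
    push_cast
    rw [sum_erase _ (by rw [hkb, inv_zero]), ZMod.sum_range_inv_mul_add_eq_zero hp2 hu, mul_zero]
  obtain ⟨c, hc⟩ := hsum
  obtain ⟨r, hr⟩ := sq_dvd_prod_add_mul_sub s (fun i => u * i + b) (fun _ => m) (p : ℤ)
  rw [← mul_sum, hc] at hr
  exact Int.modEq_iff_dvd.2 ⟨-(r + m * c), by linear_combination -hr⟩

theorem prod_range_add_prime_mul_modEq_factorial (hp2 : p ≠ 2) (m : ℤ) :
    ∏ i ∈ range (p - 1), ((i : ℤ) + 1 + p * m) ≡ (p - 1)! [ZMOD p ^ 2] := by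
  have hpos := (Fact.out : p.Prime).pos
  have hrange : (range p).erase (p - 1) = range (p - 1) := by
    ext i; simp only [mem_erase, mem_range]; omega
  have := prod_erase_add_prime_mul_modEq hp2 (u := 1) (b := 1)
    (by exact_mod_cast (Fact.out : p.Prime).not_dvd_one) (k := p - 1) (by omega)
    (by push_cast [Nat.cast_sub hpos]; simp) m
  simp only [hrange, one_mul] at this
  rw [← prod_range_add_one_eq_factorial]
  push_cast
  exact this

theorem exists_factorial_mul_eq_and_modEq (hp2 : p ≠ 2) (k : ℕ) :
    ∃ U : ℤ, ((k * p)! : ℤ) = p ^ k * k ! * U ∧ U ≡ (p - 1)! ^ k [ZMOD p ^ 2] := by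
  induction k with
  | zero => exact ⟨1, by simp, by simp [Int.ModEq.refl]⟩
  | succ k ih =>
    obtain ⟨U, hU, hUmod⟩ := ih
    have hpos := (Fact.out : p.Prime).pos
    refine ⟨U * ∏ i ∈ range (p - 1), ((i : ℤ) + 1 + p * k), ?_,
      by rw [pow_succ]; exact hUmod.mul (prod_range_add_prime_mul_modEq_factorial hp2 k)⟩
    have hblock : ∏ i ∈ range p, ((k * p + i + 1 : ℕ) : ℤ)
        = p * (k + 1) * ∏ i ∈ range (p - 1), ((i : ℤ) + 1 + p * k) := by
      rw [show p = p - 1 + 1 by omega, prod_range_succ, Nat.add_sub_cancel]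
      push_cast [Nat.cast_sub hpos]
      rw [mul_comm]; congr 1
      · ring
      · exact prod_congr rfl fun i _ => by ring
    rw [show (k + 1) * p = k * p + p by ring, ← prod_range_add_one_eq_factorial, prod_range_add,
      Nat.cast_mul, prod_range_add_one_eq_factorial, Nat.cast_prod, hU, hblock, factorial_succ]
    push_cast
    ring

theorem exists_prod_range_four_mul_add_three_eq_and_modEq (h4 : p % 4 = 1) :
    ∃ C : ℤ, ∏ i ∈ range p, (4 * i + 3 : ℤ) = 3 * p * C ∧
      C ≡ ∏ i ∈ (range p).erase ((p - 1) / 4), (4 * i + 1 : ℤ) [ZMOD p ^ 2] := by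
  have hp : p.Prime := Fact.out
  set k := (p - 1) / 4
  have hk : k < p := by omega
  refine ⟨∏ i ∈ (range p).erase k, (-4 * i + -1 + p * 4 : ℤ), ?_, ?_⟩
  · rw [← prod_range_reflect, ← mul_prod_erase _ _ (mem_range.2 hk)]
    congr 1
    · omega
    · refine prod_congr rfl fun i hi => ?_
      have := mem_range.1 (mem_of_mem_erase hi)
      omega
  refine (prod_erase_add_prime_mul_modEq (by omega) ?_ hk ⟨-1, by omega⟩ 4).trans ?_
  · exact fun h => hp.not_intCast_dvd_four (by omega) (dvd_neg.1 h)
  have hcard : Even #((range p).erase k) := by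
    rw [card_erase_of_mem (mem_range.2 hk), card_range]
    exact Nat.even_iff.2 (by omega)
  simp only [show ∀ i : ℕ, (-4 * i + -1 : ℤ) = -(4 * i + 1) from fun i => by ring, prod_neg,
    hcard.neg_one_pow, one_mul]
  rfl

theorem four_pow_mul_sq_modEq (h4 : p % 4 = 1) :
    4 ^ p * (∏ i ∈ (range p).erase ((p - 1) / 4), (4 * i + 1 : ℤ)) ^ 2
      ≡ 4 * ((p - 1)! : ℤ) ^ 2 [ZMOD p ^ 2] := by
  have hp : p.Prime := Fact.out
  have hp2 : p ≠ 2 := by omega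
  set A := ∏ i ∈ (range p).erase ((p - 1) / 4), (4 * i + 1 : ℤ)
  have hA : ∏ i ∈ range p, (4 * i + 1 : ℤ) = p * A := by
    rw [← mul_prod_erase _ _ (mem_range.2 (show (p - 1) / 4 < p by omega))]
    congr 1
    omega
  obtain ⟨C, hC, hCA⟩ := exists_prod_range_four_mul_add_three_eq_and_modEq h4
  obtain ⟨U₂, hU₂, hU₂mod⟩ := exists_factorial_mul_eq_and_modEq hp2 2
  obtain ⟨U₄, hU₄, hU₄mod⟩ := exists_factorial_mul_eq_and_modEq hp2 4
  have hexact : 4 * U₄ = 2 ^ (2 * p) * U₂ * A * C := by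
    have := congrArg (Nat.cast : ℕ → ℤ) (factorial_four_mul p)
    push_cast at this
    rw [hU₄, prod_mul_distrib, hA, hC, hU₂] at this
    have hp0 : (6 * p ^ 4 : ℤ) ≠ 0 := by have := hp.ne_zero; positivity
    apply mul_left_cancel₀ hp0
    norm_num [factorial] at this
    linear_combination this
  have hcong : 4 * (p - 1)! ^ 4 ≡ 2 ^ (2 * p) * (p - 1)! ^ 2 * A * A [ZMOD p ^ 2] :=
    calc 4 * (p - 1)! ^ 4 ≡ 4 * U₄ [ZMOD p ^ 2] := (hU₄mod.mul_left 4).symm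
      _ = 2 ^ (2 * p) * U₂ * A * C := hexact
      _ ≡ 2 ^ (2 * p) * (p - 1)! ^ 2 * A * A [ZMOD p ^ 2] :=
        ((hU₂mod.mul_left _).mul_right A).mul hCA
  have hcop : IsCoprime ((p : ℤ) ^ 2) (((p - 1)! : ℤ) ^ 2) := by
    rw [← Nat.cast_pow, ← Nat.cast_pow, Nat.isCoprime_iff_coprime]
    exact Nat.Coprime.pow 2 2 ((hp.coprime_iff_not_dvd).2 (by rw [hp.dvd_factorial]; omega))
  have hfactor : (4 * (p - 1)! ^ 2 - 4 ^ p * A ^ 2) * (p - 1)! ^ 2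
      = 4 * (p - 1)! ^ 4 - 2 ^ (2 * p) * (p - 1)! ^ 2 * A * A := by
    rw [pow_mul]; ring
  rw [Int.modEq_iff_dvd]
  exact hcop.dvd_of_dvd_mul_right (hfactor ▸ hcong.symm.dvd)

theorem four_pow_mul_sq_prod_modEq (h4 : p % 4 = 1) (n : ℕ) :
    4 ^ p * (∏ i ∈ (range p).erase ((p - 1) / 4), (4 * i + 1 + p * (4 * n) : ℤ)) ^ 2
      ≡ 4 * (∏ i ∈ range (p - 1), (i + 1 + p * n : ℤ)) ^ 2 [ZMOD p ^ 2] := by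
  have hp2 : p ≠ 2 := by omega
  have hA := prod_erase_add_prime_mul_modEq hp2 (u := 4) (b := 1)
    ((Fact.out : p.Prime).not_intCast_dvd_four hp2) (show (p - 1) / 4 < p by omega)
    ⟨1, by rw [mul_one]; exact_mod_cast (show 4 * ((p - 1) / 4) + 1 = p by omega)⟩ (4 * n)
  have hB := prod_range_add_prime_mul_modEq_factorial hp2 n
  exact ((hA.pow 2).mul_left _).trans
    ((four_pow_mul_sq_modEq h4).trans ((hB.pow 2).mul_left _).symm)

end Prime

theorem prod_range_one_add_four_mul_eq {p : ℕ} (h4 : p % 4 = 1) (n : ℕ) :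
    ∏ i ∈ range p, (1 + 4 * ((i : ℚ) + n * p))
      = p * (1 + 4 * n) * ∏ i ∈ (range p).erase ((p - 1) / 4), (4 * i + 1 + p * (4 * n) : ℤ) := by
  have hk : (4 * ((p - 1) / 4 : ℕ) + 1 : ℚ) = p := by
    exact_mod_cast (show 4 * ((p - 1) / 4) + 1 = p by omega)
  rw [← mul_prod_erase _ _ (mem_range.2 (show (p - 1) / 4 < p by omega))]
  push_cast
  congr 1
  · linear_combination hk
  · exact prod_congr rfl fun i _ => by ring

theorem prod_range_one_add_eq {p : ℕ} (hp : 1 ≤ p) (n : ℕ) :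
    ∏ i ∈ range p, (1 + (i : ℚ) + n * p)
      = p * (1 + n) * ∏ i ∈ range (p - 1), (i + 1 + p * n : ℤ) := by
  rw [show p = p - 1 + 1 by omega, prod_range_succ]
  push_cast [Nat.cast_sub hp]
  rw [mul_comm]
  congr 1
  · ring
  · exact prod_congr rfl fun i _ => by ring

theorem padicNorm_div_le_of_dvd {p : ℕ} [Fact p.Prime] {a b : ℤ} {k : ℕ}
    (ha : (p : ℤ) ^ k ∣ a) (hb : ¬ (p : ℤ) ∣ b) : padicNorm p (a / b) ≤ (p : ℚ) ^ (-k : ℤ) := by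
  rw [padicNorm.div, (padicNorm.int_eq_one_iff b).2 hb, div_one]
  exact padicNorm.dvd_iff_norm_le.1 (by exact_mod_cast ha)

/-- For a prime `p ≡ 1 (mod 4)` and `n` with `p ∤ n+1`,
`4^p ∏_{i=0}^{p-1} ((1+4(i+np))/(1+i+np))^2 ≡ 4 ((1+4n)/(1+n))^2 (mod p^2)`. -/
theorem prod_ratio_cong (p : ℕ) (hp : p.Prime) (h4 : p % 4 = 1) (n : ℕ)
    (hn : ¬ p ∣ (n + 1)) :
    padicNorm p
      ((4 : ℚ) ^ p * (∏ i ∈ Finset.range p,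
          ((1 + 4 * ((i : ℚ) + n * p)) / (1 + (i : ℚ) + n * p)) ^ 2)
        - 4 * ((1 + 4 * (n : ℚ)) / (1 + (n : ℚ))) ^ 2)
      ≤ (p : ℚ) ^ (-(2 : ℤ)) := by
  have := Fact.mk hp
  set A := ∏ i ∈ (range p).erase ((p - 1) / 4), (4 * i + 1 + p * (4 * n) : ℤ)
  set B := ∏ i ∈ range (p - 1), (i + 1 + p * n : ℤ)
  have hpZ : Prime (p : ℤ) := Nat.prime_iff_prime_int.1 hp
  have hBp : ¬ (p : ℤ) ∣ B := by
    rw [((prod_range_add_prime_mul_modEq_factorial (by omega) n).of_dvd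
      (dvd_pow_self _ two_ne_zero)).dvd_iff, Int.natCast_dvd_natCast, hp.dvd_factorial]
    omega
  have hB0 : (B : ℚ) ≠ 0 := Int.cast_ne_zero.2 fun h => hBp (h ▸ dvd_zero _)
  have hp0 : (p : ℚ) ≠ 0 := by exact_mod_cast hp.ne_zero
  rw [prod_pow, prod_div_distrib, prod_range_one_add_four_mul_eq h4,
    prod_range_one_add_eq hp.one_le, show
      (4 : ℚ) ^ p * (p * (1 + 4 * n) * A / (p * (1 + n) * B)) ^ 2 - 4 * ((1 + 4 * n) / (1 + n)) ^ 2
        = (((1 + 4 * n) ^ 2 * (4 ^ p * A ^ 2 - 4 * B ^ 2) : ℤ) : ℚ)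
          / (((1 + n) ^ 2 * B ^ 2 : ℤ) : ℚ)
      by push_cast; field_simp]
  refine padicNorm_div_le_of_dvd ((four_pow_mul_sq_prod_modEq h4 n).symm.dvd.mul_left _)
    fun h => ?_
  rcases hpZ.dvd_mul.1 h with h | h
  · exact hn (Int.natCast_dvd_natCast.1 (by simpa [add_comm] using hpZ.dvd_of_dvd_pow h))
  · exact hBp (hpZ.dvd_of_dvd_pow h)
end

section
/- For a prime p ≡ 1 (mod 6) and nonnegative integer n, define G(n) = 6^{p−1} · ∏_{0≤j≤p−1, j≠(p−1)/6} (1+6j+6np) · ∏_{0≤j≤p−1, j≠(p−1)/3} (1+3j+3np) · ∏_{i=0}^{p−2} (1+i+np)^{−2}. Then G(n) ≡ G(0) ≡ 1 (mod p^2) as p-adic units. -/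
/-!
Write `G n = N n / D n ^ 2` with `N n`, `D n` natural numbers built from products of `p - 1`
terms of arithmetic progressions `r + m j` (`0 ≤ j < p`, with the multiple of `p` left out)
shifted by multiples of `p`. Modulo `p²`, `∏ (a_j + p e) ≡ ∏ a_j + p e ∑_j ∏_{k ≠ j} a_k`, and the
sum vanishes modulo `p` because the `a_j` run over all nonzero residues, whose inverses add up to
`0`; so `N n ≡ N 0` and `D n ≡ D 0 = (p - 1)!`. For `N 0`, splitting `(mp)!` once into residue
classes modulo `m` and once into blocks of length `p` shows that the progression products for
`m = 6` and `m = 2` multiply to powers of `(p - 1)!` modulo `p²`. Together with the symmetry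
`j ↦ p - 1 - j` this gives `N 0 ² ≡ (p - 1)! ⁴`, and Wilson's and Fermat's theorems modulo `p`
fix the sign.
-/

open Finset
open scoped Nat

theorem Finset.prod_add_of_mul_self_eq_zero {ι R : Type*} [DecidableEq ι] [CommRing R]
    {c : R} (hc : c * c = 0) (s : Finset ι) (f : ι → R) :
    ∏ i ∈ s, (f i + c) = ∏ i ∈ s, f i + c * ∑ i ∈ s, ∏ j ∈ s.erase i, f j := by
  induction s using Finset.induction_on with
  | empty => simp
  | insert a s ha ih =>
    have herase : ∀ i ∈ s, ∏ j ∈ (insert a s).erase i, f j = f a * ∏ j ∈ s.erase i, f j :=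
      fun i hi => by
        rw [erase_insert_of_ne (ne_of_mem_of_not_mem hi ha).symm,
          prod_insert (fun h => ha (mem_of_mem_erase h))]
    rw [prod_insert ha, prod_insert ha, sum_insert ha, ih, erase_insert ha,
      sum_congr rfl herase, ← mul_sum]
    linear_combination (∑ i ∈ s, ∏ j ∈ s.erase i, f j) * hc

theorem Finset.prod_range_mul_eq_prod_prod {M : Type*} [CommMonoid M] (f : ℕ → M) (a b : ℕ) :
    ∏ x ∈ range (a * b), f x = ∏ i ∈ range b, ∏ j ∈ range a, f (a * i + j) := by
  induction b with
  | zero => simp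
  | succ b ih => rw [Nat.mul_succ, prod_range_add, ih, prod_range_succ]

section FiniteField

variable {K ι : Type*} [Field K] [Fintype K] {s : Finset ι} {t : ι → K}

theorem FiniteField.sum_inv_eq_zero (hK : 2 < Fintype.card K) : ∑ x : K, x⁻¹ = 0 := by
  rw [Fintype.sum_bijective _ inv_involutive.bijective _ (fun x => x) (fun _ => rfl)]
  simpa using FiniteField.sum_pow_lt_card_sub_one (K := K) 1 (by omega)

variable [DecidableEq K]

theorem FiniteField.prod_univ_erase_zero : ∏ x ∈ univ.erase (0 : K), x = -1 := by
  have h := congrArg Units.val (FiniteField.prod_univ_units_id_eq_neg_one (K := K))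
  rw [Units.coe_prod, Units.val_neg, Units.val_one] at h
  rw [← h]
  refine (prod_nbij (fun u : Kˣ => (u : K)) (fun u _ => by simp)
    Units.val_injective.injOn (fun x hx => ?_) (fun _ _ => rfl)).symm
  exact ⟨Units.mk0 x (ne_of_mem_erase hx), mem_coe.2 (mem_univ _), rfl⟩

@[to_additive]
theorem prod_comp_eq_prod_univ_erase_zero_of_bijOn {M : Type*} [CommMonoid M]
    (h : Set.BijOn t s {0}ᶜ) (g : K → M) :
    ∏ i ∈ s, g (t i) = ∏ x ∈ univ.erase 0, g x :=
  prod_nbij t (fun i hi => by simpa using h.mapsTo hi) h.injOn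
    (by simpa [Set.compl_eq_univ_sdiff] using h.surjOn) (fun _ _ => rfl)

theorem prod_eq_neg_one_of_bijOn (h : Set.BijOn t s {0}ᶜ) : ∏ i ∈ s, t i = -1 :=
  (prod_comp_eq_prod_univ_erase_zero_of_bijOn h id).trans FiniteField.prod_univ_erase_zero

theorem sum_prod_erase_eq_zero_of_bijOn [DecidableEq ι] (hK : 2 < Fintype.card K)
    (h : Set.BijOn t s {0}ᶜ) :
    ∑ i ∈ s, ∏ j ∈ s.erase i, t j = 0 := by
  have hterm : ∀ i ∈ s, ∏ j ∈ s.erase i, t j = -(t i)⁻¹ := fun i hi => by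
    have hti : t i ≠ 0 := h.mapsTo hi
    rw [eq_neg_iff_add_eq_zero, ← mul_left_inj' hti, add_mul, mul_comm, mul_prod_erase s t hi,
      prod_eq_neg_one_of_bijOn h, inv_mul_cancel₀ hti]
    ring
  rw [sum_congr rfl hterm, sum_neg_distrib, sum_comp_eq_sum_univ_erase_zero_of_bijOn h (·⁻¹),
    sum_erase _ inv_zero, FiniteField.sum_inv_eq_zero hK, neg_zero]

end FiniteField

namespace ZMod
variable {p : ℕ} [Fact p.Prime]

theorem bijOn_affine_range_erase {a d : ZMod p} (hd : d ≠ 0) {j₀ : ℕ} (hj₀ : j₀ < p)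
    (hz : a + d * j₀ = 0) :
    Set.BijOn (fun j : ℕ => a + d * j) ((range p).erase j₀) {0}ᶜ := by
  have hcast : Set.InjOn (fun j : ℕ => (j : ZMod p)) (range p) := fun i hi j hj hij => by
    simpa [val_cast_of_lt (mem_range.1 hi), val_cast_of_lt (mem_range.1 hj)] using
      congrArg val hij
  have hinj : Set.InjOn (fun j : ℕ => a + d * j) (range p) := fun i hi j hj hij =>
    hcast hi hj (mul_left_cancel₀ hd (add_left_cancel hij))
  refine ⟨fun j hj hzero => ?_, hinj.mono (by simp), fun y hy => ?_⟩
  · obtain ⟨hne, hj⟩ := mem_erase.1 hj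
    exact hne (hinj hj (mem_range.2 hj₀) (hzero.trans hz.symm))
  · refine ⟨((y - a) / d).val, ?_, by simp [mul_div_cancel₀ _ hd]⟩
    refine mem_erase.2 ⟨fun h => hy ?_, mem_range.2 (val_lt _)⟩
    rw [← hz, ← h]
    simp [mul_div_cancel₀ _ hd]

theorem isUnit_natCast_of_natCast_ne_zero {a : ℕ} (h : (a : ZMod p) ≠ 0) :
    IsUnit (a : ZMod (p ^ 2)) :=
  (ZMod.isUnit_natCast_iff_not_dvd_pow Fact.out two_pos).2
    fun hpa => h ((ZMod.natCast_eq_zero_iff _ _).2 hpa)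

end ZMod

theorem padicNorm_div_sub_div_le {p : ℕ} [Fact p.Prime] {a b c d : ℕ} (hb : (b : ZMod p) ≠ 0)
    (hd : (d : ZMod p) ≠ 0) (h : (a * d : ZMod (p ^ 2)) = c * b) :
    padicNorm p ((a : ℚ) / b - c / d) ≤ (p : ℚ) ^ (-(2 : ℤ)) := by
  have hb0 : (b : ℚ) ≠ 0 := by rintro h0; exact hb (by simp [Nat.cast_eq_zero.1 h0])
  have hd0 : (d : ℚ) ≠ 0 := by rintro h0; exact hd (by simp [Nat.cast_eq_zero.1 h0])
  have hnum : ((p ^ 2 : ℕ) : ℤ) ∣ (a * d - b * c : ℤ) := by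
    rw [← ZMod.intCast_zmod_eq_zero_iff_dvd]
    push_cast
    rw [h]
    ring
  have hden : ¬ (p : ℤ) ∣ (b * d : ℤ) := by
    rw [← ZMod.intCast_zmod_eq_zero_iff_dvd]
    push_cast
    exact mul_ne_zero hb hd
  have := padicNorm.dvd_iff_norm_le.1 hnum
  have hbd : ((b : ℚ) * d) = ((b * d : ℤ) : ℚ) := by push_cast; ring
  rw [div_sub_div _ _ hb0 hd0, padicNorm.div, hbd, (padicNorm.int_eq_one_iff _).2 hden, div_one]
  simpa using this

/-- The product of the terms `r + m j`, `0 ≤ j < p`, omitting the one of index `r (p - 1) / m`,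
which is the term `r p` when `m ∣ p - 1`. -/
def progressionProd (p m r : ℕ) : ℕ := ∏ j ∈ (range p).erase (r * (p - 1) / m), (r + m * j)

section progressionProd
variable {p m r : ℕ}

theorem progression_index_lt (hp : 0 < p) (hr : r ≤ m) : r * (p - 1) / m < p :=
  (Nat.div_le_of_le_mul (Nat.mul_le_mul_right _ hr)).trans_lt (by omega)

theorem add_mul_progression_index (hp : 0 < p) (hm : m ∣ p - 1) :
    r + m * (r * (p - 1) / m) = r * p := by
  obtain ⟨k, hk⟩ := hm
  rcases Nat.eq_zero_or_pos m with rfl | hm0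
  · obtain rfl : p = 1 := by omega
    simp
  rw [hk, Nat.mul_left_comm, Nat.mul_div_cancel_left _ hm0, show p = m * k + 1 by omega]
  ring

theorem progressionProd_one_one : progressionProd p 1 1 = (p - 1)! := by
  rcases Nat.eq_zero_or_pos p with rfl | hp
  · rfl
  rw [progressionProd, one_mul, Nat.div_one, ← prod_range_add_one_eq_factorial]
  obtain ⟨q, rfl⟩ : ∃ q, p = q + 1 := ⟨p - 1, by omega⟩
  rw [Nat.add_sub_cancel, range_add_one, erase_insert notMem_range_self]
  exact prod_congr rfl fun _ _ => by ring

theorem progressionProd_mul_mul {c : ℕ} (hc : 0 < c) (hp : 0 < p) (hr : r ≤ m) :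
    progressionProd p (c * m) (c * r) = c ^ (p - 1) * progressionProd p m r := by
  rw [progressionProd, progressionProd, Nat.mul_assoc, Nat.mul_div_mul_left _ _ hc,
    prod_congr rfl fun j _ => show c * r + c * m * j = c * (r + m * j) by ring,
    prod_mul_distrib, prod_const, card_erase_of_mem (mem_range.2 (progression_index_lt hp hr)),
    card_range]

theorem prod_progressionProd (hp : 0 < p) (hm : m ∣ p - 1) :
    ∏ r ∈ range m, progressionProd p m (r + 1) =
      ∏ k ∈ range m, ∏ i ∈ range (p - 1), (1 + i + k * p) := by
  -- both sides are `(m p)! / (m! p ^ m)`: split `(m p)!` by residues mod `m`, then by blocks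
  have hres : ∏ x ∈ range (m * p), (x + 1) =
      ∏ r ∈ range m, ((r + 1) * p * progressionProd p m (r + 1)) := by
    rw [prod_range_mul_eq_prod_prod, prod_comm]
    refine prod_congr rfl fun r hr => ?_
    have hidx := mem_range.2 (progression_index_lt hp (mem_range.1 hr))
    rw [← add_mul_progression_index hp hm, progressionProd]
    exact (prod_congr rfl fun _ _ => by ring).trans
      (mul_prod_erase _ (fun j => r + 1 + m * j) hidx).symm
  have hblk : ∏ x ∈ range (p * m), (x + 1) =
      ∏ k ∈ range m, ((k + 1) * p * ∏ i ∈ range (p - 1), (1 + i + k * p)) := by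
    rw [prod_range_mul_eq_prod_prod]
    refine prod_congr rfl fun k _ => ?_
    obtain ⟨q, rfl⟩ : ∃ q, p = q + 1 := ⟨p - 1, by omega⟩
    rw [prod_range_succ, Nat.add_sub_cancel, mul_comm]
    congr 1
    · ring
    · exact prod_congr rfl fun _ _ => by ring
  rw [mul_comm, hblk] at hres
  simp only [prod_mul_distrib] at hres
  exact (Nat.eq_of_mul_eq_mul_left (by positivity) hres).symm

variable [Fact p.Prime]

theorem natCast_ne_zero_of_dvd_sub_one (hm : m ∣ p - 1) : (m : ZMod p) ≠ 0 := by
  have hp := (Fact.out : p.Prime).two_le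
  rw [Ne, ZMod.natCast_eq_zero_iff]
  intro hpm
  have := Nat.le_of_dvd (by omega) hm
  have := Nat.le_of_dvd (Nat.pos_of_ne_zero (by rintro rfl; omega)) hpm
  omega

theorem bijOn_progression (hm : m ∣ p - 1) (hr : r ≤ m) :
    Set.BijOn (fun j : ℕ => (r : ZMod p) + m * j) ((range p).erase (r * (p - 1) / m)) {0}ᶜ := by
  have hp := (Fact.out : p.Prime).pos
  have hzero := congrArg (Nat.cast : ℕ → ZMod p) (add_mul_progression_index (r := r) hp hm)
  push_cast at hzero
  exact ZMod.bijOn_affine_range_erase (natCast_ne_zero_of_dvd_sub_one hm)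
    (progression_index_lt hp hr) (by simpa using hzero)

theorem natCast_progressionProd (hm : m ∣ p - 1) (hr : r ≤ m) :
    (progressionProd p m r : ZMod p) = -1 := by
  push_cast [progressionProd]
  exact prod_eq_neg_one_of_bijOn (bijOn_progression hm hr)

theorem prod_progression_add_mul (hp : p ≠ 2) (hm : m ∣ p - 1) (hr : r ≤ m)
    (e : ZMod (p ^ 2)) :
    ∏ j ∈ (range p).erase (r * (p - 1) / m),
        (((r + m * j : ℕ) : ZMod (p ^ 2)) + (p : ZMod (p ^ 2)) * e) =
      (progressionProd p m r : ZMod (p ^ 2)) := by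
  obtain ⟨k, hk⟩ : p ∣ ∑ i ∈ (range p).erase (r * (p - 1) / m),
      ∏ j ∈ ((range p).erase (r * (p - 1) / m)).erase i, (r + m * j) := by
    rw [← ZMod.natCast_eq_zero_iff]
    push_cast
    refine sum_prod_erase_eq_zero_of_bijOn ?_ (bijOn_progression hm hr)
    have := (Fact.out : p.Prime).two_le
    rw [ZMod.card]
    omega
  have hp2 : (p : ZMod (p ^ 2)) ^ 2 = 0 := by exact_mod_cast ZMod.natCast_self (p ^ 2)
  rw [prod_add_of_mul_self_eq_zero (by linear_combination e ^ 2 * hp2)]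
  simp only [← Nat.cast_prod, ← Nat.cast_sum, hk, progressionProd]
  push_cast
  linear_combination (e * k) * hp2

theorem natCast_progressionProd_sub (hp : p ≠ 2) (hm : m ∣ p - 1) (hr : r ≤ m) :
    (progressionProd p m (m - r) : ZMod (p ^ 2)) = progressionProd p m r := by
  have hp1 := (Fact.out : p.Prime).two_le
  have hidx : (m - r) * (p - 1) / m = p - 1 - r * (p - 1) / m := by
    obtain ⟨k, hk⟩ := hm
    have hm0 : 0 < m := Nat.pos_of_ne_zero (by rintro rfl; omega)
    rw [hk, Nat.mul_left_comm, Nat.mul_left_comm r, Nat.mul_div_cancel_left _ hm0,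
      Nat.mul_div_cancel_left _ hm0, Nat.sub_mul]
  have hodd : Even (p - 1) := ((Fact.out : p.Prime).even_sub_one hp)
  have hreflect : progressionProd p m (m - r) =
      ∏ j ∈ (range p).erase (r * (p - 1) / m), (m - r + m * (p - 1 - j)) := by
    have hlt := progression_index_lt (by omega : 0 < p) hr (p := p)
    rw [progressionProd, hidx]
    generalize r * (p - 1) / m = i₀ at hlt ⊢
    refine prod_nbij' (fun j => p - 1 - j) (fun j => p - 1 - j) ?_ ?_ ?_ ?_ ?_ <;>
      intro j hj <;> simp only [mem_erase, mem_range] at hj ⊢ <;> try omega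
    rw [show p - 1 - (p - 1 - j) = j by omega]
  rw [hreflect, ← prod_progression_add_mul hp hm hr (-m), Nat.cast_prod]
  calc ∏ j ∈ (range p).erase (r * (p - 1) / m), ((m - r + m * (p - 1 - j) : ℕ) : ZMod (p ^ 2))
      = ∏ j ∈ (range p).erase (r * (p - 1) / m),
          (-1) * (((r + m * j : ℕ) : ZMod (p ^ 2)) + p * -m) := by
        refine prod_congr rfl fun j hj => ?_
        have hj : j < p := mem_range.1 (mem_of_mem_erase hj)
        push_cast [Nat.cast_sub hr, Nat.cast_sub (show j ≤ p - 1 by omega),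
          Nat.cast_sub (show 1 ≤ p by omega)]
        ring
    _ = _ := by
        rw [prod_mul_distrib, prod_const, card_erase_of_mem
          (mem_range.2 (progression_index_lt (by omega) hr)), card_range, hodd.neg_one_pow,
          one_mul]

theorem natCast_prod_range_add_mul (hp : p ≠ 2) (k : ℕ) :
    ((∏ i ∈ range (p - 1), (1 + i + k * p) : ℕ) : ZMod (p ^ 2)) = ((p - 1)! : ℕ) := by
  have h := prod_progression_add_mul hp (one_dvd (p - 1)) le_rfl (k : ZMod (p ^ 2))
  rw [progressionProd_one_one, one_mul, Nat.div_one] at h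
  rw [← h, Nat.cast_prod]
  obtain ⟨q, rfl⟩ : ∃ q, p = q + 1 := ⟨p - 1, by have := (Fact.out : p.Prime).pos; omega⟩
  rw [Nat.add_sub_cancel, range_add_one, erase_insert notMem_range_self]
  exact prod_congr rfl fun _ _ => by push_cast; ring

theorem natCast_prod_progressionProd (hp : p ≠ 2) (hm : m ∣ p - 1) :
    ∏ r ∈ range m, (progressionProd p m (r + 1) : ZMod (p ^ 2)) = ((p - 1)! : ℕ) ^ m := by
  rw [← Nat.cast_prod, prod_progressionProd (Fact.out : p.Prime).pos hm, Nat.cast_prod,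
    prod_congr rfl fun k _ => natCast_prod_range_add_mul hp k, prod_const, card_range]

theorem sq_natCast_six_pow_mul_progressionProd (hp6 : p % 6 = 1) :
    ((6 ^ (p - 1) * progressionProd p 6 1 * progressionProd p 3 1 : ℕ) : ZMod (p ^ 2)) ^ 2 =
      (((p - 1)! : ℕ) ^ 2) ^ 2 := by
  have hp2 : p ≠ 2 := by omega
  have hp0 : 0 < p := by omega
  have h6 := natCast_prod_progressionProd hp2 (show 6 ∣ p - 1 by omega)
  have h2 := natCast_prod_progressionProd hp2 (show 2 ∣ p - 1 by omega)
  have q62 : progressionProd p 6 2 = 2 ^ (p - 1) * progressionProd p 3 1 :=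
    progressionProd_mul_mul (c := 2) (m := 3) (r := 1) two_pos hp0 (by norm_num)
  have q63 : progressionProd p 6 3 = 3 ^ (p - 1) * progressionProd p 2 1 :=
    progressionProd_mul_mul (c := 3) (m := 2) (r := 1) three_pos hp0 (by norm_num)
  have q64 : progressionProd p 6 4 = 2 ^ (p - 1) * progressionProd p 3 2 :=
    progressionProd_mul_mul (c := 2) (m := 3) (r := 2) two_pos hp0 (by norm_num)
  have q66 : progressionProd p 6 6 = 6 ^ (p - 1) * (p - 1)! :=
    (progressionProd_mul_mul (c := 6) (m := 1) (r := 1) (by norm_num) hp0 le_rfl).trans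
      (by rw [progressionProd_one_one])
  have q22 : progressionProd p 2 2 = 2 ^ (p - 1) * (p - 1)! :=
    (progressionProd_mul_mul (c := 2) (m := 1) (r := 1) two_pos hp0 le_rfl).trans
      (by rw [progressionProd_one_one])
  have r65 := natCast_progressionProd_sub hp2 (show 6 ∣ p - 1 by omega) (show 1 ≤ 6 by norm_num)
  have r32 := natCast_progressionProd_sub hp2 (show 3 ∣ p - 1 by omega) (show 1 ≤ 3 by norm_num)
  norm_num [prod_range_succ, q62, q63, q64, q66, q22] at h6 h2 r65 r32
  rw [r65, r32] at h6
  have h2ne : (2 : ZMod p) ≠ 0 := by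
    exact_mod_cast natCast_ne_zero_of_dvd_sub_one (show 2 ∣ p - 1 by omega)
  have hsix : (6 : ZMod (p ^ 2)) ^ (p - 1) = 2 ^ (p - 1) * 3 ^ (p - 1) := by
    rw [← mul_pow]
    norm_num
  refine (ZMod.isUnit_natCast_of_natCast_ne_zero
    (a := 2 ^ (p - 1) * (p - 1)! ^ 2) ?_).mul_left_cancel ?_
  · push_cast
    rw [ZMod.wilsons_lemma, ZMod.pow_card_sub_one_eq_one h2ne]
    norm_num
  · push_cast at h6 ⊢
    rw [hsix] at h6 ⊢
    linear_combination (2 : ZMod (p ^ 2)) ^ (p - 1) * h6 -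
      ((2 : ZMod (p ^ 2)) ^ (p - 1)) ^ 3 * ((3 : ZMod (p ^ 2)) ^ (p - 1)) ^ 2 *
        (progressionProd p 6 1 : ZMod (p ^ 2)) ^ 2 * (progressionProd p 3 1 : ZMod (p ^ 2)) ^ 2 * h2

theorem natCast_six_pow_mul_progressionProd (hp6 : p % 6 = 1) :
    ((6 ^ (p - 1) * progressionProd p 6 1 * progressionProd p 3 1 : ℕ) : ZMod (p ^ 2)) =
      ((p - 1)! : ℕ) ^ 2 := by
  have h2ne : (2 : ZMod p) ≠ 0 := by
    exact_mod_cast natCast_ne_zero_of_dvd_sub_one (show 2 ∣ p - 1 by omega)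
  have h6ne : (6 : ZMod p) ≠ 0 := by
    exact_mod_cast natCast_ne_zero_of_dvd_sub_one (show 6 ∣ p - 1 by omega)
  refine (ZMod.isUnit_natCast_of_natCast_ne_zero
    (a := 6 ^ (p - 1) * progressionProd p 6 1 * progressionProd p 3 1 + (p - 1)! ^ 2)
      ?_).mul_left_cancel ?_
  · push_cast
    rw [natCast_progressionProd (show 6 ∣ p - 1 by omega) (by norm_num),
      natCast_progressionProd (show 3 ∣ p - 1 by omega) (by norm_num),
      ZMod.pow_card_sub_one_eq_one h6ne, ZMod.wilsons_lemma]
    norm_num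
    exact h2ne
  · have hsq := sq_natCast_six_pow_mul_progressionProd hp6
    push_cast at hsq ⊢
    linear_combination hsq

theorem natCast_six_pow_mul_prod_erase_mul_prod_erase (hp6 : p % 6 = 1) (n : ℕ) :
    ((6 ^ (p - 1) * (∏ j ∈ (range p).erase ((p - 1) / 6), (1 + 6 * j + 6 * n * p)) *
      ∏ j ∈ (range p).erase ((p - 1) / 3), (1 + 3 * j + 3 * n * p) : ℕ) : ZMod (p ^ 2)) =
      ((p - 1)! : ℕ) ^ 2 := by
  have hp2 : p ≠ 2 := by omega
  have h6 := prod_progression_add_mul hp2 (show 6 ∣ p - 1 by omega) (show 1 ≤ 6 by norm_num)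
    (6 * n)
  have h3 := prod_progression_add_mul hp2 (show 3 ∣ p - 1 by omega) (show 1 ≤ 3 by norm_num)
    (3 * n)
  rw [one_mul] at h6 h3
  rw [← natCast_six_pow_mul_progressionProd hp6]
  push_cast
  rw [← h6, ← h3]
  congr 1
  · congr 1
    exact prod_congr rfl fun _ _ => by push_cast; ring
  · exact prod_congr rfl fun _ _ => by push_cast; ring

end progressionProd

/-- For a prime `p ≡ 1 (mod 6)` and
`G(n) = 6^{p-1} ∏_{0≤j≤p-1, j≠(p-1)/6} (1+6j+6np) ∏_{0≤j≤p-1, j≠(p-1)/3} (1+3j+3np)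
  ∏_{i=0}^{p-2} (1+i+np)^{-2}`, we have `G(n) ≡ G(0) ≡ 1 (mod p^2)`. -/
theorem G_cong_one (p : ℕ) (hp : p.Prime) (h6 : p % 6 = 1)
    (G : ℕ → ℚ)
    (hG : ∀ n, G n = (6 : ℚ) ^ (p - 1)
      * (∏ j ∈ (Finset.range p).erase ((p - 1) / 6), (1 + 6 * (j : ℚ) + 6 * n * p))
      * (∏ j ∈ (Finset.range p).erase ((p - 1) / 3), (1 + 3 * (j : ℚ) + 3 * n * p))
      * (∏ i ∈ Finset.range (p - 1), ((1 + (i : ℚ) + n * p)⁻¹) ^ 2))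
    (n : ℕ) :
    padicNorm p (G n - G 0) ≤ (p : ℚ) ^ (-(2 : ℤ)) ∧
      padicNorm p (G 0 - 1) ≤ (p : ℚ) ^ (-(2 : ℤ)) := by
  have := Fact.mk hp
  set D : ℕ → ℕ := fun n => ∏ i ∈ range (p - 1), (1 + i + n * p) with hD
  set N : ℕ → ℕ := fun n => 6 ^ (p - 1) *
    (∏ j ∈ (range p).erase ((p - 1) / 6), (1 + 6 * j + 6 * n * p)) *
    ∏ j ∈ (range p).erase ((p - 1) / 3), (1 + 3 * j + 3 * n * p) with hN
  have hGND : ∀ n, G n = N n / (D n ^ 2 : ℕ) := fun n => by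
    rw [hG n]
    push_cast [hN, hD, prod_pow, prod_inv_distrib]
    ring
  have hDW : ∀ n, (D n : ZMod (p ^ 2)) = ((p - 1)! : ℕ) :=
    natCast_prod_range_add_mul (by omega)
  have hNW : ∀ n, (N n : ZMod (p ^ 2)) = ((p - 1)! : ℕ) ^ 2 :=
    natCast_six_pow_mul_prod_erase_mul_prod_erase h6
  have hDp : ∀ n, ((D n ^ 2 : ℕ) : ZMod p) ≠ 0 := fun n => by
    have hDn := congrArg (ZMod.castHom (dvd_pow_self p two_ne_zero) (ZMod p)) (hDW n)
    rw [map_natCast, map_natCast, ZMod.wilsons_lemma] at hDn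
    push_cast
    rw [hDn]
    norm_num
  refine ⟨?_, ?_⟩
  · rw [hGND, hGND]
    exact padicNorm_div_sub_div_le (hDp n) (hDp 0) (by push_cast [hNW, hDW]; ring)
  · rw [hGND]
    simpa using padicNorm_div_sub_div_le (c := 1) (d := 1) (hDp 0) (by simp)
      (by push_cast [hNW, hDW]; ring)
end
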